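/- arXiv:0805.3354 — 2 statements merged into one kernel-verified Lean document; each statement's English description precedes it below -/
import Mathlib

section
/- Let γ > 0 and let g be the multiplicative function on positive integers defined by g(n) = |μ(n)| γ^ω(n) / n, where μ is the Möbius function and ω(n) is the number of distinct prime factors of n. Then the sum of g(n) over n ≤ z is ≫ (log z)^γ as z → ∞. -/
/-!
Rankin's trick. Let `P` be the primes up to `y` and expand
`∏_{p ∈ P} (1 + γ/p) = ∑_{S ⊆ P} ∏_{p ∈ S} γ/p`. A subset `S` with `∏ S ≤ z` contributes exactly
the weight of the squarefree number `∏ S ≤ z`. For the other subsets `1 < log (∏ S) / log z`, and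
`log (∏ S) = ∑_{q ∈ S} log q`, so they contribute at most `(γ ∑_{q ∈ P} log q / q) / log z` times
the whole product. Mertens' first estimate `∑_{p ≤ y} log p / p ≤ log y + O(1)` makes this
fraction at most `1/2` once `log y = log z / (4γ)`, while his second estimate
`∑_{p ≤ y} 1/p ≥ log log y - O(1)` gives `∏_{p ≤ y} (1 + γ/p) ≫ (log y)^γ ≫ (log z)^γ`.
-/

open Nat hiding log
open Finset Real

lemma div_le_factorization_factorial {p : ℕ} (hp : p.Prime) (N : ℕ) :
    N / p ≤ (N !).factorization p :=
  calc N / p ≤ (N / p)!.factorization p + N / p := le_add_self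
    _ = (p * (N / p))!.factorization p := (factorization_factorial_mul hp).symm
    _ ≤ (N !).factorization p :=
      (factorization_le_iff_dvd (factorial_ne_zero _) (factorial_ne_zero _)).mpr
        (factorial_dvd_factorial (mul_div_le N p)) p

lemma sum_div_mul_log_le_log_factorial (N : ℕ) :
    ∑ p ∈ primesLE N, ((N / p : ℕ) : ℝ) * log p ≤ log (N ! : ℕ) := by
  have hsupp : (N !).factorization.support ⊆ primesLE N := fun p hp => by
    have hp' : p.Prime := prime_of_mem_primeFactors hp
    exact mem_primesLE.mpr ⟨hp'.dvd_factorial.mp (dvd_of_mem_primeFactors hp), hp'⟩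
  rw [log_nat_eq_sum_factorization, Finsupp.sum_of_support_subset _ hsupp _ (by simp)]
  gcongr with p hp
  exact div_le_factorization_factorial (prime_of_mem_primesLE hp) N

lemma sum_primesLE_log_div_le (N : ℕ) :
    ∑ p ∈ primesLE N, log p / p ≤ log N + log 4 := by
  rcases N.eq_zero_or_pos with rfl | hN
  · simpa [primesLE_zero] using log_nonneg (by norm_num : (1 : ℝ) ≤ 4)
  have hN' : (0 : ℝ) < N := by exact_mod_cast hN
  -- `N / p < ⌊N / p⌋ + 1`, and the extra terms `log p` add up to `θ N ≤ N log 4`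
  have hterm : ∀ p ∈ primesLE N, N * (log p / p) ≤ ((N / p : ℕ) : ℝ) * log p + log p := by
    intro p hp
    have hp0 : (0 : ℝ) < p := by exact_mod_cast (prime_of_mem_primesLE hp).pos
    have hNp : (N : ℝ) ≤ p * ((N / p : ℕ) + 1) := by
      exact_mod_cast (lt_mul_div_succ N (prime_of_mem_primesLE hp).pos).le
    calc N * (log p / p) ≤ p * ((N / p : ℕ) + 1) * (log p / p) := by gcongr
      _ = ((N / p : ℕ) : ℝ) * log p + log p := by field_simp
  have hfact : log (N ! : ℕ) ≤ N * log N := by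
    rw [← Real.log_pow]
    exact log_le_log (by positivity) (by exact_mod_cast factorial_le_pow N)
  have hbound : N * ∑ p ∈ primesLE N, log p / p ≤ N * (log N + log 4) :=
    calc N * ∑ p ∈ primesLE N, log p / p
        ≤ ∑ p ∈ primesLE N, ((N / p : ℕ) : ℝ) * log p + Chebyshev.theta N := by
          rw [mul_sum, Chebyshev.theta_eq_sum_primesLE_log, ← sum_add_distrib]
          exact sum_le_sum hterm
      _ ≤ N * log N + log 4 * N :=
          add_le_add ((sum_div_mul_log_le_log_factorial N).trans hfact)
            (Chebyshev.theta_le_log4_mul_x hN'.le)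
      _ = N * (log N + log 4) := by ring
  exact le_of_mul_le_mul_left hbound hN'

lemma inv_one_sub_le_exp {x : ℝ} (h : x ≤ 1 / 2) :
    (1 - x)⁻¹ ≤ exp (x + 2 * x ^ 2) := by
  calc (1 - x)⁻¹ ≤ x + 2 * x ^ 2 + 1 := by
        rw [inv_le_iff_one_le_mul₀ (by linarith)]
        nlinarith [mul_nonneg (sq_nonneg x) (by linarith : 0 ≤ 1 - 2 * x)]
    _ ≤ exp (x + 2 * x ^ 2) := add_one_le_exp _

lemma exp_sub_sq_le_one_add {x : ℝ} (h0 : 0 ≤ x) : exp (x - x ^ 2) ≤ 1 + x := by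
  rw [← le_log_iff_exp_le (by linarith)]
  have hinv : (1 + x)⁻¹ ≤ 1 - x + x ^ 2 := by
    rw [inv_le_iff_one_le_mul₀ (by linarith)]
    nlinarith [pow_nonneg h0 3]
  linarith [one_sub_inv_le_log_of_pos (by linarith : 0 < 1 + x)]

lemma prod_inv_one_sub_le_exp_sum {ι : Type*} (s : Finset ι) {x : ι → ℝ}
    (h : ∀ i ∈ s, x i ≤ 1 / 2) :
    ∏ i ∈ s, (1 - x i)⁻¹ ≤ exp (∑ i ∈ s, (x i + 2 * x i ^ 2)) := by
  rw [exp_sum]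
  exact prod_le_prod (fun i hi => inv_nonneg.2 (by linarith [h i hi]))
    fun i hi => inv_one_sub_le_exp (h i hi)

lemma exp_sum_sub_sq_le_prod_one_add {ι : Type*} (s : Finset ι) {x : ι → ℝ}
    (h0 : ∀ i ∈ s, 0 ≤ x i) :
    exp (∑ i ∈ s, (x i - x i ^ 2)) ≤ ∏ i ∈ s, (1 + x i) := by
  rw [exp_sum]
  exact prod_le_prod (fun i _ => (exp_pos _).le) fun i hi => exp_sub_sq_le_one_add (h0 i hi)

lemma sum_primesLE_inv_sq_le_one (N : ℕ) : ∑ p ∈ primesLE N, ((p : ℝ) ^ 2)⁻¹ ≤ 1 := by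
  calc ∑ p ∈ primesLE N, ((p : ℝ) ^ 2)⁻¹ ≤ ∑ i ∈ Ioo 1 (N + 1), ((i : ℝ) ^ 2)⁻¹ := by
        refine sum_le_sum_of_subset_of_nonneg (fun p hp => ?_) fun _ _ _ => by positivity
        have hp := mem_primesLE.mp hp
        exact mem_Ioo.mpr ⟨hp.2.one_lt, Nat.lt_succ_of_le hp.1⟩
    _ ≤ 2 / ((1 : ℕ) + 1) := sum_Ioo_inv_sq_le 1 (N + 1)
    _ = 1 := by norm_num

lemma sum_Icc_inv_le_prod_primesLE (N : ℕ) :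
    ∑ m ∈ Icc 1 N, (m : ℝ)⁻¹ ≤ ∏ p ∈ primesLE N, (1 - (p : ℝ)⁻¹)⁻¹ := by
  set f : ℕ →* ℝ := invMonoidHom.comp (Nat.castRingHom ℝ : ℕ →* ℝ)
  have hf : ∀ {p : ℕ}, p.Prime → ‖f p‖ < 1 := fun hp => by
    simpa [f, abs_inv] using inv_lt_one_of_one_lt₀ (by exact_mod_cast hp.one_lt)
  obtain ⟨-, hsum⟩ :=
    EulerProduct.summable_and_hasSum_smoothNumbers_prod_primesBelow_geometric hf (N + 1)
  have hsmooth : ∀ m ∈ Icc 1 N, m ∈ (N + 1).smoothNumbers := fun m hm => by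
    have hm := mem_Icc.mp hm
    exact mem_smoothNumbers_of_lt (by omega) (by omega)
  have h := sum_le_hasSum ((Icc 1 N).subtype (· ∈ (N + 1).smoothNumbers))
    (fun m _ => by simp [f]) hsum
  rw [sum_subtype_eq_sum_filter, filter_true_of_mem hsmooth] at h
  simpa [f, primesLE] using h

lemma log_log_le_sum_primesLE_inv (N : ℕ) :
    log (log (N + 1)) ≤ ∑ p ∈ primesLE N, (p : ℝ)⁻¹ + 2 := by
  rcases N.eq_zero_or_pos with rfl | hN
  · simp
  have hlog : 0 < log (N + 1) := log_pos (by norm_cast; omega)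
  have hharmonic : log (N + 1) ≤ ∑ m ∈ Icc 1 N, (m : ℝ)⁻¹ := by
    simpa [harmonic_eq_sum_Icc] using log_add_one_le_harmonic N
  have hexp := prod_inv_one_sub_le_exp_sum (primesLE N) (x := fun p : ℕ => (p : ℝ)⁻¹)
    fun p hp => by
      have : (2 : ℝ) ≤ p := by exact_mod_cast (prime_of_mem_primesLE hp).two_le
      rw [inv_le_comm₀ (by linarith) (by norm_num)]
      linarith
  have hsq := sum_primesLE_inv_sq_le_one N
  rw [log_le_iff_le_exp hlog]
  refine (hharmonic.trans (sum_Icc_inv_le_prod_primesLE N)).trans (hexp.trans ?_)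
  gcongr
  simp only [sum_add_distrib, ← mul_sum, inv_pow]
  linarith

lemma sum_powerset_filter_mem_prod {ι R : Type*} [DecidableEq ι] [CommSemiring R]
    {s : Finset ι} {i : ι} (hi : i ∈ s) (a : ι → R) :
    ∑ t ∈ s.powerset with i ∈ t, ∏ j ∈ t, a j = a i * ∏ j ∈ s.erase i, (1 + a j) := by
  have hi' : ∀ t ∈ (s.erase i).powerset, i ∉ t := fun t ht hit =>
    notMem_erase i s (mem_powerset.mp ht hit)
  rw [sum_filter, ← insert_erase hi, sum_powerset_insert (notMem_erase i s),
    erase_insert (notMem_erase i s), sum_eq_zero fun t ht => if_neg (hi' t ht), zero_add,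
    prod_one_add, mul_sum]
  exact sum_congr rfl fun t ht => by rw [if_pos (mem_insert_self i t), prod_insert (hi' t ht)]

lemma sum_powerset_filter_lt_prod_mul_log_le {P : Finset ℕ} (hP : 0 ∉ P) {a : ℕ → ℝ}
    (ha : ∀ p ∈ P, 0 ≤ a p) {x : ℝ} (hx : 0 < x) :
    (∑ S ∈ P.powerset with x < ∏ p ∈ S, ((p : ℕ) : ℝ), ∏ p ∈ S, a p) * log x ≤
      (∑ q ∈ P, a q * log q) * ∏ p ∈ P, (1 + a p) := by
  have hw : ∀ S ∈ P.powerset, 0 ≤ ∏ p ∈ S, a p := fun S hS =>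
    prod_nonneg fun p hp => ha p (mem_powerset.mp hS hp)
  have hlog_prod : ∀ S ∈ P.powerset, log (∏ p ∈ S, (p : ℝ)) = ∑ q ∈ S, log q := fun S hS =>
    log_prod fun p hp => Nat.cast_ne_zero.mpr (ne_of_mem_of_not_mem (mem_powerset.mp hS hp) hP)
  calc (∑ S ∈ P.powerset with x < ∏ p ∈ S, ((p : ℕ) : ℝ), ∏ p ∈ S, a p) * log x
      ≤ ∑ S ∈ P.powerset with x < ∏ p ∈ S, ((p : ℕ) : ℝ), (∏ p ∈ S, a p) * ∑ q ∈ S, log q := by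
        rw [sum_mul]
        refine sum_le_sum fun S hS => ?_
        obtain ⟨hS, hxS⟩ := mem_filter.mp hS
        rw [← hlog_prod S hS]
        exact mul_le_mul_of_nonneg_left (log_le_log hx hxS.le) (hw S hS)
    _ ≤ ∑ S ∈ P.powerset, (∏ p ∈ S, a p) * ∑ q ∈ S, log q :=
        sum_le_sum_of_subset_of_nonneg (filter_subset _ _) fun S hS _ =>
          mul_nonneg (hw S hS) (sum_nonneg fun q _ => log_natCast_nonneg q)
    _ = ∑ q ∈ P, ∑ S ∈ P.powerset with q ∈ S, (∏ p ∈ S, a p) * log q := by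
        simp_rw [mul_sum]
        exact sum_comm' fun S q => by
          simp only [mem_powerset, mem_filter]
          exact ⟨fun h => ⟨⟨h.1, h.2⟩, h.1 h.2⟩, fun h => ⟨h.1.1, h.1.2⟩⟩
    _ ≤ ∑ q ∈ P, a q * log q * ∏ p ∈ P, (1 + a p) := by
        refine sum_le_sum fun q hq => ?_
        rw [← sum_mul, sum_powerset_filter_mem_prod hq, ← mul_prod_erase P _ hq]
        have herase : 0 ≤ ∏ p ∈ P.erase q, (1 + a p) :=
          prod_nonneg fun p hp => by linarith [ha p (mem_of_mem_erase hp)]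
        have hcoef := mul_nonneg (mul_nonneg (ha q hq) (log_natCast_nonneg q)) herase
        calc (a q * ∏ p ∈ P.erase q, (1 + a p)) * log q
            = a q * log q * (∏ p ∈ P.erase q, (1 + a p)) * 1 := by ring
          _ ≤ a q * log q * (∏ p ∈ P.erase q, (1 + a p)) * (1 + a q) := by
            gcongr; linarith [ha q hq]
          _ = _ := by ring
    _ = (∑ q ∈ P, a q * log q) * ∏ p ∈ P, (1 + a p) := (sum_mul ..).symm
noncomputable def squarefreeWeight (γ : ℝ) (n : ℕ) : ℝ :=
  if Squarefree n then γ ^ n.primeFactors.card / n else 0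

lemma squarefreeWeight_nonneg {γ : ℝ} (hγ : 0 ≤ γ) (n : ℕ) : 0 ≤ squarefreeWeight γ n := by
  unfold squarefreeWeight
  split_ifs <;> positivity

lemma squarefreeWeight_prod_primes (γ : ℝ) {S : Finset ℕ} (hS : ∀ p ∈ S, p.Prime) :
    squarefreeWeight γ (∏ p ∈ S, p) = ∏ p ∈ S, γ / p := by
  have hsq : Squarefree (∏ p ∈ S, p) :=
    squarefree_prod_of_pairwise_isCoprime (fun p hp q hq hpq => by
      simpa only [← coprime_iff_isRelPrime] using (coprime_primes (hS p hp) (hS q hq)).mpr hpq)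
      fun p hp => (hS p hp).prime.squarefree
  rw [squarefreeWeight, if_pos hsq, primeFactors_prod hS, prod_div_distrib, prod_const,
    cast_prod]

lemma sum_powerset_filter_le_sum_squarefreeWeight {γ : ℝ} (hγ : 0 ≤ γ) {P : Finset ℕ}
    (hP : ∀ p ∈ P, p.Prime) (x : ℝ) :
    ∑ S ∈ P.powerset with ∏ p ∈ S, ((p : ℕ) : ℝ) ≤ x, ∏ p ∈ S, γ / p ≤
      ∑ n ∈ Icc 1 ⌊x⌋₊, squarefreeWeight γ n := by
  have hSP : ∀ S ∈ P.powerset, ∀ p ∈ S, p.Prime := fun S hS p hp => hP p (mem_powerset.mp hS hp)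
  calc ∑ S ∈ P.powerset with ∏ p ∈ S, ((p : ℕ) : ℝ) ≤ x, ∏ p ∈ S, γ / p
      = ∑ S ∈ P.powerset with ∏ p ∈ S, ((p : ℕ) : ℝ) ≤ x, squarefreeWeight γ (∏ p ∈ S, p) :=
        sum_congr rfl fun S hS =>
          (squarefreeWeight_prod_primes γ (hSP S (mem_filter.mp hS).1)).symm
    _ = ∑ n ∈ (P.powerset.filter fun S => ∏ p ∈ S, ((p : ℕ) : ℝ) ≤ x).image (∏ p ∈ ·, p),
          squarefreeWeight γ n := by
        refine (sum_image fun S hS T hT hST => ?_).symm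
        rw [← primeFactors_prod (hSP S (mem_filter.mp hS).1),
          ← primeFactors_prod (hSP T (mem_filter.mp hT).1)]
        exact congrArg _ hST
    _ ≤ ∑ n ∈ Icc 1 ⌊x⌋₊, squarefreeWeight γ n := by
        refine sum_le_sum_of_subset_of_nonneg (fun n hn => ?_)
          fun n _ _ => squarefreeWeight_nonneg hγ n
        obtain ⟨S, hS, rfl⟩ := mem_image.mp hn
        obtain ⟨hS, hSx⟩ := mem_filter.mp hS
        exact mem_Icc.mpr ⟨one_le_prod' fun p hp => (hSP S hS p hp).one_le,
          le_floor (by rwa [cast_prod])⟩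

lemma one_sub_mul_prod_le_sum_squarefreeWeight {γ : ℝ} (hγ : 0 ≤ γ) {P : Finset ℕ}
    (hP : ∀ p ∈ P, p.Prime) {x : ℝ} (hx : 1 < x) :
    (1 - γ * (∑ q ∈ P, log q / q) / log x) * ∏ p ∈ P, (1 + γ / p) ≤
      ∑ n ∈ Icc 1 ⌊x⌋₊, squarefreeWeight γ n := by
  have hlog : 0 < log x := log_pos hx
  set F := ∏ p ∈ P, (1 + γ / (p : ℝ))
  set head := ∑ S ∈ P.powerset with ∏ p ∈ S, ((p : ℕ) : ℝ) ≤ x, ∏ p ∈ S, γ / (p : ℝ)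
  set tail := ∑ S ∈ P.powerset with x < ∏ p ∈ S, ((p : ℕ) : ℝ), ∏ p ∈ S, γ / (p : ℝ)
  have hsplit : head + tail = F := by
    simpa only [not_le, ← prod_one_add] using sum_filter_add_sum_filter_not P.powerset
      (fun S => ∏ p ∈ S, ((p : ℕ) : ℝ) ≤ x) fun S => ∏ p ∈ S, γ / (p : ℝ)
  have htail : tail ≤ γ * (∑ q ∈ P, log q / q) * F / log x := by
    have hweight : ∑ q ∈ P, γ / q * log q = γ * ∑ q ∈ P, log q / q := by
      rw [mul_sum]; exact sum_congr rfl fun q _ => by ring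
    rw [le_div_iff₀ hlog, ← hweight]
    exact sum_powerset_filter_lt_prod_mul_log_le (fun h => not_prime_zero (hP 0 h))
      (fun p _ => by positivity) (by linarith)
  calc (1 - γ * (∑ q ∈ P, log q / q) / log x) * F
      = F - γ * (∑ q ∈ P, log q / q) * F / log x := by ring
    _ ≤ head := by linarith
    _ ≤ ∑ n ∈ Icc 1 ⌊x⌋₊, squarefreeWeight γ n :=
        sum_powerset_filter_le_sum_squarefreeWeight hγ hP x

lemma exp_mul_log_rpow_le_prod_primesLE_one_add_div {γ : ℝ} (hγ : 0 ≤ γ) {N : ℕ} (hN : 0 < N) :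
    exp (-(2 * γ + γ ^ 2)) * log (N + 1) ^ γ ≤ ∏ p ∈ primesLE N, (1 + γ / p) := by
  have hlog : 0 < log (N + 1) := log_pos (by norm_cast; omega)
  rw [rpow_def_of_pos hlog, ← exp_add]
  refine le_trans ?_ (exp_sum_sub_sq_le_prod_one_add (primesLE N) (x := fun p : ℕ => γ / p)
    fun p _ => by positivity)
  gcongr
  have hsum : ∑ p ∈ primesLE N, (γ / p - (γ / p) ^ 2) =
      γ * ∑ p ∈ primesLE N, (p : ℝ)⁻¹ - γ ^ 2 * ∑ p ∈ primesLE N, ((p : ℝ) ^ 2)⁻¹ := by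
    rw [mul_sum, mul_sum, ← sum_sub_distrib]
    exact sum_congr rfl fun p _ => by ring
  rw [hsum]
  nlinarith [mul_le_mul_of_nonneg_left (log_log_le_sum_primesLE_inv N) hγ,
    mul_le_mul_of_nonneg_left (sum_primesLE_inv_sq_le_one N) (sq_nonneg γ)]

lemma exp_mul_log_rpow_div_two_le_sum_squarefreeWeight {γ : ℝ} (hγ : 0 ≤ γ) {N : ℕ}
    (hN : 0 < N) {x : ℝ} (hx : 1 < x) (hNx : γ * (log N + log 4) ≤ log x / 2) :
    exp (-(2 * γ + γ ^ 2)) * log (N + 1) ^ γ / 2 ≤ ∑ n ∈ Icc 1 ⌊x⌋₊, squarefreeWeight γ n := by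
  have hweight : γ * (∑ p ∈ primesLE N, log p / p) / log x ≤ 1 / 2 := by
    rw [div_le_iff₀ (log_pos hx)]
    linarith [mul_le_mul_of_nonneg_left (sum_primesLE_log_div_le N) hγ]
  have hF : 0 ≤ ∏ p ∈ primesLE N, (1 + γ / (p : ℝ)) := by positivity
  have hsieve := one_sub_mul_prod_le_sum_squarefreeWeight hγ
    (P := primesLE N) (fun p hp => prime_of_mem_primesLE hp) hx
  nlinarith [exp_mul_log_rpow_le_prod_primesLE_one_add_div hγ hN]

theorem stmt_8 (γ : ℝ) (hγ : 0 < γ) :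
    ∃ c > (0 : ℝ), ∃ z₀ : ℝ, ∀ z ≥ z₀,
      c * (Real.log z) ^ γ ≤
        ∑ n ∈ Finset.Icc 1 ⌊z⌋₊,
          (if Squarefree n then γ ^ n.primeFactors.card / (n : ℝ) else 0) := by
  refine ⟨exp (-(2 * γ + γ ^ 2)) / (2 * (4 * γ) ^ γ), by positivity, exp (12 * γ),
    fun z hz => ?_⟩
  have hz1 : 1 < z := by linarith [add_one_le_exp (12 * γ)]
  have hL : 12 * γ ≤ log z := (le_log_iff_exp_le (by linarith)).mpr hz
  have hy : 3 ≤ log z / (4 * γ) := by rw [le_div_iff₀ (by positivity)]; linarith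
  -- sieve by the primes up to `exp (log z / (4γ))`
  set N := ⌊exp (log z / (4 * γ))⌋₊
  have hN : 0 < N := floor_pos.mpr (one_le_exp (by linarith))
  have hlogN : log N ≤ log z / (4 * γ) := by
    rw [← log_exp (log z / (4 * γ))]
    exact log_le_log (by exact_mod_cast hN) (floor_le (exp_pos _).le)
  have hlogN1 : log z / (4 * γ) ≤ log (N + 1) := by
    rw [← log_exp (log z / (4 * γ))]
    exact log_le_log (exp_pos _) (lt_floor_add_one _).le
  have hNz : γ * (log N + log 4) ≤ log z / 2 := by
    have hlog4 : log 4 ≤ 3 := by linarith [log_le_sub_one_of_pos (by norm_num : (0 : ℝ) < 4)]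
    have hγL : γ * (log z / (4 * γ)) = log z / 4 := by field_simp
    nlinarith
  calc exp (-(2 * γ + γ ^ 2)) / (2 * (4 * γ) ^ γ) * log z ^ γ
      = exp (-(2 * γ + γ ^ 2)) * (log z / (4 * γ)) ^ γ / 2 := by
        rw [div_rpow (by linarith) (by positivity)]; ring
    _ ≤ exp (-(2 * γ + γ ^ 2)) * log (N + 1) ^ γ / 2 := by gcongr
    _ ≤ _ := exp_mul_log_rpow_div_two_le_sum_squarefreeWeight hγ.le hN hz1 hNz
end

section
/- Let d ≥ 2. For every prime p > max(d, C_d) for a suitable constant C_d depending only on d, and every b₁, b₂, b₃ ∈ Z with p ∤ b₁b₂b₃, the congruence b₁x₁^d + b₂x₂^d + b₃x₃^d ≡ 0 (mod p) has a solution (x₁,x₂,x₃) not all divisible by p. -/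
/-!
The characters `χ` of `𝔽_q^×` with `χ ^ d = 1` detect `d`-th powers: `∑ χ, χ u` vanishes unless
`u` is a nonzero `d`-th power. If `a x ^ d + b y ^ d + c` had no zero, then
`∑ u, (∑ χ, χ u) * (∑ ψ, ψ ((-c - a u) / b)) = 0`. Substituting `u = (-c / a) t` turns this into
`∑ χ ψ, χ (-c / a) ψ (-c / b) J(χ, ψ)`, whose term at `(1, 1)` is `q - 2` while the other at most
`d ^ 2` terms are Jacobi sums of absolute value at most `√q`. So `q - 2 ≤ d ^ 2 √q`, which fails
once `q > (d ^ 2 + 1) ^ 2`; the zero then lifts to `(x, y, 1)` over `ℤ`.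
-/

open Finset MulChar

lemma MulChar.norm_apply_le_one {M : Type*} [CommMonoid M] [Finite Mˣ] (χ : MulChar M ℂ) (a : M) :
    ‖χ a‖ ≤ 1 := by
  by_cases ha : IsUnit a
  · obtain ⟨u, rfl⟩ := ha
    refine ((pow_eq_one_iff_of_nonneg (norm_nonneg _) (Nat.card_pos (α := Mˣ)).ne').mp ?_).le
    rw [← norm_pow, ← map_pow, ← Units.val_pow_eq_pow_val, pow_card_eq_one', Units.val_one,
      map_one, norm_one]
  · simp [χ.map_nonunit ha]

lemma MulChar.sum_apply_eq_zero_of_mem_of_apply_ne_one {M R : Type*} [CommMonoid M] [CommRing R]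
    [IsDomain R] {X : Subgroup (MulChar M R)} [Fintype X] {a : M} {χ₀ : MulChar M R}
    (hχ₀ : χ₀ ∈ X) (ha : χ₀ a ≠ 1) : ∑ χ : X, (χ : MulChar M R) a = 0 := by
  have hshift : χ₀ a * ∑ χ : X, (χ : MulChar M R) a = ∑ χ : X, (χ : MulChar M R) a := by
    rw [mul_sum]
    exact Fintype.sum_equiv (Equiv.mulLeft ⟨χ₀, hχ₀⟩) _ _ fun χ ↦ by simp
  have hzero : (χ₀ a - 1) * ∑ χ : X, (χ : MulChar M R) a = 0 := by
    rw [sub_mul, one_mul, hshift, sub_self]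
  exact (mul_eq_zero.mp hzero).resolve_left (sub_ne_zero.mpr ha)

variable {F : Type*} [Field F] [Fintype F]

variable (F) in
-- The characters of order dividing `d`: by duality, those trivial on `d`-th powers.
noncomputable def dualOfPowers (d : ℕ) : Subgroup (MulChar F ℂ) :=
  (subgroupOrderIsoSubgroupMulChar F ℂ (powMonoidHom d).range).ofDual

noncomputable instance (d : ℕ) : Fintype (dualOfPowers F d) := Fintype.ofFinite _

lemma card_dualOfPowers_le {d : ℕ} (hd : 0 < d) : Nat.card (dualOfPowers F d) ≤ d := by
  rw [dualOfPowers, card_subgroupOrderIsoSubgroupMulChar, ← Subgroup.index,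
    IsCyclic.index_powMonoidHom_range]
  exact Nat.le_of_dvd hd (Nat.gcd_dvd_right _ _)

lemma exists_pow_eq_of_sum_dualOfPowers_ne_zero {d : ℕ} {u : F}
    (h : ∑ χ : dualOfPowers F d, (χ : MulChar F ℂ) u ≠ 0) : ∃ t, t ^ d = u := by
  have hu : u ≠ 0 := by rintro rfl; simp at h
  have hmem : Units.mk0 u hu ∈ (powMonoidHom d).range := by
    have hdual := mem_subgroupOrderIsoSubgroupMulChar_symm_iff (R := ℂ)
      (X := dualOfPowers F d) (m := Units.mk0 u hu)
    rw [dualOfPowers, OrderDual.toDual_ofDual, OrderIso.symm_apply_apply] at hdual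
    refine hdual.mpr fun χ hχ ↦ ?_
    by_contra hne
    exact h (sum_apply_eq_zero_of_mem_of_apply_ne_one hχ hne)
  obtain ⟨t, ht⟩ := hmem
  exact ⟨t, by simpa using congrArg Units.val ht⟩

lemma sum_apply_mul_apply_sub_div_eq {R : Type*} [CommRing R] (χ ψ : MulChar F R) {a e : F}
    (b : F) (ha : a ≠ 0) (he : e ≠ 0) :
    ∑ u, χ u * ψ ((e - a * u) / b) = χ (e / a) * ψ (e / b) * jacobiSum χ ψ := by
  rw [jacobiSum, mul_sum, ← Equiv.sum_comp (Equiv.mulLeft₀ (e / a) (div_ne_zero he ha))]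
  refine sum_congr rfl fun t _ ↦ ?_
  have hline : (e - a * (e / a * t)) / b = e / b * (1 - t) := by field_simp
  rw [Equiv.mulLeft₀_apply, hline, map_mul, map_mul]
  ring

lemma norm_jacobiSum_eq {χ ψ : MulChar F ℂ} (hχ : χ ≠ 1) (hψ : ψ ≠ 1) (hχψ : χ * ψ ≠ 1) :
    ‖jacobiSum χ ψ‖ = √(Fintype.card F) := by
  have hstar : star (jacobiSum χ ψ) = jacobiSum χ⁻¹ ψ⁻¹ := by
    simp [jacobiSum, star_sum, star_apply']
  have hchar : ringChar ℂ ≠ ringChar F := by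
    rw [ringChar.eq_zero]; exact (CharP.ringChar_ne_zero_of_finite F).symm
  have h := jacobiSum_mul_jacobiSum_inv hchar hχ hψ hχψ
  rw [← hstar, RCLike.star_def, RCLike.mul_conj] at h
  have h' : ‖jacobiSum χ ψ‖ ^ 2 = Fintype.card F := Complex.ofReal_injective (by push_cast; exact h)
  rw [← h', Real.sqrt_sq (norm_nonneg _)]

lemma one_le_sqrt_card : 1 ≤ √(Fintype.card F : ℝ) :=
  Real.one_le_sqrt.mpr (by exact_mod_cast Fintype.card_pos)

lemma norm_jacobiSum_le {χ ψ : MulChar F ℂ} (h : (χ, ψ) ≠ (1, 1)) :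
    ‖jacobiSum χ ψ‖ ≤ √(Fintype.card F) := by
  classical
  by_cases hχ : χ = 1
  · have hψ : ψ ≠ 1 := by rintro rfl; exact h (by rw [hχ])
    rw [hχ, jacobiSum_one_nontrivial hψ, norm_neg, norm_one]
    exact one_le_sqrt_card
  by_cases hψ : ψ = 1
  · rw [hψ, jacobiSum_comm, jacobiSum_one_nontrivial hχ, norm_neg, norm_one]
    exact one_le_sqrt_card
  by_cases hχψ : χ * ψ = 1
  · rw [eq_inv_of_mul_eq_one_right hχψ, jacobiSum_nontrivial_inv hχ, norm_neg]
    exact (χ.norm_apply_le_one _).trans one_le_sqrt_card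
  exact (norm_jacobiSum_eq hχ hψ hχψ).le

lemma sum_mul_sum_eq_sum_jacobiSum {R : Type*} [CommRing R] (X : Subgroup (MulChar F R))
    [Fintype X] {a e : F} (b : F) (ha : a ≠ 0) (he : e ≠ 0) :
    ∑ u, (∑ χ : X, (χ : MulChar F R) u) * ∑ ψ : X, (ψ : MulChar F R) ((e - a * u) / b) =
      ∑ q : X × X, (q.1 : MulChar F R) (e / a) * (q.2 : MulChar F R) (e / b) *
        jacobiSum (q.1 : MulChar F R) q.2 := by
  simp_rw [sum_mul_sum, Fintype.sum_prod_type]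
  rw [sum_comm]
  refine sum_congr rfl fun χ _ ↦ ?_
  rw [sum_comm]
  exact sum_congr rfl fun ψ _ ↦ sum_apply_mul_apply_sub_div_eq _ _ b ha he

lemma norm_sum_jacobiSum_sub_card_le (X : Subgroup (MulChar F ℂ)) [Fintype X] {α β : F}
    (hα : α ≠ 0) (hβ : β ≠ 0) :
    ‖∑ q : X × X, (q.1 : MulChar F ℂ) α * (q.2 : MulChar F ℂ) β *
        jacobiSum (q.1 : MulChar F ℂ) q.2 - (Fintype.card F - 2)‖ ≤
      Nat.card X ^ 2 * √(Fintype.card F) := by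
  classical
  rw [← add_sum_erase univ _ (mem_univ (1 : X × X))]
  simp only [Prod.fst_one, Prod.snd_one, OneMemClass.coe_one, one_apply hα.isUnit,
    one_apply hβ.isUnit, jacobiSum_one_one, one_mul, add_sub_cancel_left]
  refine (norm_sum_le _ _).trans ?_
  calc ∑ q ∈ univ.erase (1 : X × X), ‖(q.1 : MulChar F ℂ) α * (q.2 : MulChar F ℂ) β *
          jacobiSum (q.1 : MulChar F ℂ) q.2‖
      ≤ ∑ _q ∈ univ.erase (1 : X × X), √(Fintype.card F : ℝ) := by
        refine sum_le_sum fun q hq ↦ ?_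
        have hq1 : ((q.1 : MulChar F ℂ), (q.2 : MulChar F ℂ)) ≠ (1, 1) := by
          intro h
          exact (mem_erase.mp hq).1 (Prod.ext (Subtype.ext (congrArg Prod.fst h))
            (Subtype.ext (congrArg Prod.snd h)))
        rw [norm_mul, norm_mul]
        calc _ ≤ 1 * 1 * √(Fintype.card F : ℝ) := by
              gcongr
              exacts [norm_apply_le_one _ _, norm_apply_le_one _ _, norm_jacobiSum_le hq1]
          _ = _ := by ring
    _ ≤ Nat.card X ^ 2 * √(Fintype.card F) := by
        rw [sum_const, nsmul_eq_mul]
        gcongr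
        calc ((univ.erase (1 : X × X)).card : ℝ) ≤ (univ : Finset (X × X)).card := by
              exact_mod_cast card_erase_le
          _ = Nat.card X ^ 2 := by
              rw [card_univ, Fintype.card_prod, Nat.card_eq_fintype_card]; push_cast; ring

theorem exists_mul_pow_add_mul_pow_add_eq_zero {d : ℕ} (hd : 0 < d)
    (hF : (d ^ 2 + 1) ^ 2 < Fintype.card F) {a b c : F} (ha : a ≠ 0) (hb : b ≠ 0) (hc : c ≠ 0) :
    ∃ x y : F, a * x ^ d + b * y ^ d + c = 0 := by
  by_contra hno
  set X := dualOfPowers F d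
  have hvanish : ∀ u : F, (∑ χ : X, (χ : MulChar F ℂ) u) *
      ∑ ψ : X, (ψ : MulChar F ℂ) ((-c - a * u) / b) = 0 := by
    intro u
    by_contra hne
    obtain ⟨x, hx⟩ := exists_pow_eq_of_sum_dualOfPowers_ne_zero (left_ne_zero_of_mul hne)
    obtain ⟨y, hy⟩ := exists_pow_eq_of_sum_dualOfPowers_ne_zero (right_ne_zero_of_mul hne)
    exact hno ⟨x, y, by rw [hx, hy]; field_simp; ring⟩
  have hc' : -c ≠ 0 := neg_ne_zero.mpr hc
  have hbound := norm_sum_jacobiSum_sub_card_le X (div_ne_zero hc' ha) (div_ne_zero hc' hb)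
  rw [← sum_mul_sum_eq_sum_jacobiSum X b ha hc', sum_eq_zero fun u _ ↦ hvanish u, zero_sub,
    norm_neg] at hbound
  have hq : (Fintype.card F : ℝ) - 2 ≤ d ^ 2 * √(Fintype.card F) := by
    refine (le_trans ?_ hbound).trans ?_
    · simpa using Complex.re_le_norm ((Fintype.card F : ℂ) - 2)
    · gcongr
      exact_mod_cast card_dualOfPowers_le hd
  have hsqrt : (d : ℝ) ^ 2 + 1 < √(Fintype.card F) :=
    Real.lt_sqrt (by positivity) |>.mpr (by exact_mod_cast hF)
  have hd1 : (1 : ℝ) ≤ d := by exact_mod_cast hd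
  nlinarith [Real.sq_sqrt (Nat.cast_nonneg (α := ℝ) (Fintype.card F))]

theorem stmt_11 (d : ℕ) (hd : 2 ≤ d) :
    ∃ C : ℕ, ∀ p : ℕ, p.Prime → max d C < p →
      ∀ b₁ b₂ b₃ : ℤ, ¬ (p : ℤ) ∣ b₁ * b₂ * b₃ →
        ∃ x₁ x₂ x₃ : ℤ, ¬ ((p : ℤ) ∣ x₁ ∧ (p : ℤ) ∣ x₂ ∧ (p : ℤ) ∣ x₃) ∧
          (p : ℤ) ∣ b₁ * x₁ ^ d + b₂ * x₂ ^ d + b₃ * x₃ ^ d := by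
  refine ⟨(d ^ 2 + 1) ^ 2, fun p hp hpC b₁ b₂ b₃ hb ↦ ?_⟩
  have : Fact p.Prime := ⟨hp⟩
  have hb' : ((b₁ * b₂ * b₃ : ℤ) : ZMod p) ≠ 0 := by
    rwa [Ne, ZMod.intCast_zmod_eq_zero_iff_dvd]
  push_cast at hb'
  obtain ⟨⟨hb₁, hb₂⟩, hb₃⟩ := mul_ne_zero_iff.mp hb' |>.imp_left mul_ne_zero_iff.mp
  obtain ⟨x, y, hxy⟩ := exists_mul_pow_add_mul_pow_add_eq_zero (d := d) (by omega)
    (by rw [ZMod.card]; exact (le_max_right _ _).trans_lt hpC) hb₁ hb₂ hb₃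
  refine ⟨x.cast, y.cast, 1, fun h ↦ hp.one_lt.ne' ?_, ?_⟩
  · exact Nat.dvd_one.mp (Int.natCast_dvd_natCast.mp h.2.2)
  · rw [← ZMod.intCast_zmod_eq_zero_iff_dvd]
    push_cast
    simpa using hxy
end
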